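/- arXiv:2101.10519 — 2 statements merged into one kernel-verified Lean document; each statement's English description precedes it below -/
import Mathlib

section
/- Bing Shrinking Criterion: let X and Y be nonempty compact metric spaces and f : X → Y a continuous surjection. Then f is approximable by homeomorphisms if and only if for every ε > 0 there exists a homeomorphism h : X → X such that (1) dist_Y(f(h(x)), f(x)) < ε for all x ∈ X, and (2) diam_X(h(f⁻¹(y))) < ε for all y ∈ Y. -/
/-!
The forward direction is immediate: if `g₁, g₂ : X ≃ₜ Y` approximate `f`, with `g₁` much closer
than the modulus of uniform continuity of `g₂⁻¹`, then `h = g₂⁻¹ ∘ g₁` works.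

For the converse, let `E` be the closure in `C(X, Y)` of the orbit `{f ∘ h | h : X ≃ₜ X}`; it is
a complete metric space. For `c > 0` the maps `g` that are *uniformly `c`-fibred* (points with
sufficiently close images are `c`-close) form an open subset of `C(X, Y)`, and shrinking
homeomorphisms show that it is dense in `E`. By Baire's theorem, near `f` there is `g ∈ E` that is
uniformly `1/(n+1)`-fibred for every `n`, hence injective; as a uniform limit of surjections of a
compact space it is also surjective, so it is a homeomorphism close to `f`.
-/

/-- A continuous surjection `f : X → Y` between compact metric spaces is *approximable by
homeomorphisms* (ABH) if for every `ε > 0` there is a homeomorphism `g : X ≃ₜ Y` with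
`dist (f x) (g x) < ε` for all `x`. -/
def ApproximableByHomeomorphisms {X Y : Type} [MetricSpace X] [MetricSpace Y]
    (f : X → Y) : Prop :=
  ∀ ε > (0 : ℝ), ∃ g : X ≃ₜ Y, ∀ x : X, dist (f x) (g x) < ε

open Metric Function Set

variable {X Y : Type} [MetricSpace X] [MetricSpace Y]

def BingShrinkable (f : X → Y) : Prop :=
  ∀ ε > (0 : ℝ), ∃ h : X ≃ₜ X,
    (∀ x : X, dist (f (h x)) (f x) < ε) ∧ (∀ y : Y, diam (h '' (f ⁻¹' {y})) < ε)

theorem ApproximableByHomeomorphisms.bingShrinkable [CompactSpace Y] {f : X → Y}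
    (hf : ApproximableByHomeomorphisms f) : BingShrinkable f := by
  intro ε hε
  obtain ⟨g, hg⟩ := hf (ε / 2) (half_pos hε)
  obtain ⟨δ, hδ, hg_symm⟩ := Metric.uniformContinuous_iff.mp
    (CompactSpace.uniformContinuous_of_continuous g.symm.continuous) (ε / 2) (half_pos hε)
  obtain ⟨g', hg'⟩ := hf (min (ε / 2) (δ / 2)) (by positivity)
  have hg'_close (x : X) : dist (g' x) (f x) < ε / 2 ∧ dist (g' x) (f x) < δ / 2 := by
    rw [dist_comm]; exact lt_min_iff.mp (hg' x)
  refine ⟨g'.trans g.symm, fun x => ?_, fun y => ?_⟩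
  · calc dist (f (g.symm (g' x))) (f x)
        ≤ dist (f (g.symm (g' x))) (g (g.symm (g' x))) + dist (g' x) (f x) := by
          simpa using dist_triangle (f (g.symm (g' x))) (g' x) (f x)
      _ < ε / 2 + ε / 2 := add_lt_add (hg _) (hg'_close x).1
      _ = ε := add_halves ε
  · refine (diam_le_of_forall_dist_le (half_pos hε).le ?_).trans_lt (half_lt_self hε)
    rintro _ ⟨x, hx, rfl⟩ _ ⟨x', hx', rfl⟩
    refine (hg_symm ?_).le
    calc dist (g' x) (g' x') ≤ dist (g' x) (f x) + dist (g' x') (f x') := by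
          rw [hx, hx']; exact dist_triangle_right _ _ _
      _ < δ / 2 + δ / 2 := add_lt_add (hg'_close x).2 (hg'_close x').2
      _ = δ := add_halves δ

/-- For compact `X` and continuous `g` this is equivalent to every fibre of `g` having diameter
`< c`, but in this form it is visibly an open condition on `g ∈ C(X, Y)`. -/
def UniformlyFibred (c : ℝ) (g : X → Y) : Prop :=
  ∃ η > (0 : ℝ), ∀ x x' : X, dist (g x) (g x') < η → dist x x' < c

theorem isOpen_setOf_uniformlyFibred [CompactSpace X] (c : ℝ) :
    IsOpen {g : C(X, Y) | UniformlyFibred c g} := by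
  refine Metric.isOpen_iff.mpr fun g ⟨η, hη, hg⟩ => ⟨η / 3, by positivity, fun g' hg' => ?_⟩
  refine ⟨η / 3, by positivity, fun x x' hxx' => hg x x' ?_⟩
  have hgg' := mem_ball.mp hg'
  calc dist (g x) (g x') ≤ dist (g x) (g' x) + dist (g' x) (g' x') + dist (g' x') (g x') :=
        dist_triangle4 _ _ _ _
    _ < η / 3 + η / 3 + η / 3 := by
        gcongr
        · exact (ContinuousMap.dist_apply_le_dist x).trans_lt (by rwa [dist_comm])
        · exact (ContinuousMap.dist_apply_le_dist x').trans_lt hgg'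
    _ = η := by ring

theorem UniformlyFibred.of_diam_preimage_lt [CompactSpace X] {g : X → Y} (hg : Continuous g)
    {c : ℝ} (hfib : ∀ y, diam (g ⁻¹' {y}) < c) : UniformlyFibred c g := by
  let K : Set (X × X) := {p | c ≤ dist p.1 p.2}
  rcases K.eq_empty_or_nonempty with hK | hK
  · exact ⟨1, one_pos, fun x x' _ => not_le.mp fun hc => hK.subset (show (x, x') ∈ K from hc)⟩
  have hKc : IsCompact K := (isClosed_le continuous_const continuous_dist).isCompact
  obtain ⟨p, hpK, hp⟩ := hKc.exists_isMinOn hK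
    (show Continuous fun p : X × X => dist (g p.1) (g p.2) by fun_prop).continuousOn
  refine ⟨dist (g p.1) (g p.2), dist_pos.mpr fun heq => ?_,
    fun x x' hxx' => not_le.mp fun hc => (hp (show (x, x') ∈ K from hc)).not_gt hxx'⟩
  -- otherwise `p.1` and `p.2` lie in one fibre at distance `≥ c`
  have := dist_le_diam_of_mem isBounded_of_compactSpace
    (show p.1 ∈ g ⁻¹' {g p.2} from heq) (show p.2 ∈ g ⁻¹' {g p.2} from rfl)
  linarith [hfib (g p.2), show c ≤ dist p.1 p.2 from hpK]

theorem injective_of_forall_uniformlyFibred {g : X → Y}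
    (hg : ∀ n : ℕ, UniformlyFibred (1 / (n + 1)) g) : Injective g := by
  intro x x' hxx'
  by_contra hne
  obtain ⟨n, hn⟩ := exists_nat_one_div_lt (dist_pos.mpr hne)
  obtain ⟨η, hη, hgη⟩ := hg n
  exact lt_asymm hn (hgη x x' (by rwa [hxx', dist_self]))

theorem ContinuousMap.surjective_of_mem_closure [CompactSpace X] {S : Set C(X, Y)}
    (hS : ∀ s ∈ S, Surjective s) {g : C(X, Y)} (hg : g ∈ closure S) : Surjective g := by
  intro y
  suffices y ∈ closure (range g) by
    rwa [(isCompact_range g.continuous).isClosed.closure_eq] at this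
  refine Metric.mem_closure_iff.mpr fun r hr => ?_
  obtain ⟨s, hs, hgs⟩ := Metric.mem_closure_iff.mp hg r hr
  obtain ⟨x, rfl⟩ := hS s hs y
  exact ⟨g x, mem_range_self x, (ContinuousMap.dist_apply_le_dist x).trans_lt (by rwa [dist_comm])⟩

def homeomorphOrbit (f : C(X, Y)) : Set C(X, Y) :=
  range fun h : X ≃ₜ X => f.comp h

theorem BingShrinkable.exists_uniformlyFibred_comp [CompactSpace X] {f : C(X, Y)}
    (hf : BingShrinkable f) (h : X ≃ₜ X) {c δ : ℝ} (hc : 0 < c) (hδ : 0 < δ) :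
    ∃ h' : X ≃ₜ X,
      UniformlyFibred c (f.comp (h' : C(X, X))) ∧
        dist (f.comp (h' : C(X, X))) (f.comp (h : C(X, X))) < δ := by
  obtain ⟨η, hη, hh_symm⟩ := Metric.uniformContinuous_iff.mp
    (CompactSpace.uniformContinuous_of_continuous h.symm.continuous) (c / 2) (half_pos hc)
  obtain ⟨k, hk_dist, hk_diam⟩ := hf (min δ η) (lt_min hδ hη)
  refine ⟨h.trans k.symm, UniformlyFibred.of_diam_preimage_lt (map_continuous _) fun y => ?_, ?_⟩
  · -- `h` maps each fibre of `f ∘ k⁻¹ ∘ h` into `k '' (f ⁻¹' {y})`, of diameter `< η`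
    have hmem (x : X) (hx : f (k.symm (h x)) = y) : h x ∈ k '' (f ⁻¹' {y}) :=
      ⟨k.symm (h x), hx, k.apply_symm_apply _⟩
    refine (diam_le_of_forall_dist_le (half_pos hc).le fun x hx x' hx' => ?_).trans_lt
      (half_lt_self hc)
    have hxx' := (dist_le_diam_of_mem isBounded_of_compactSpace (hmem x hx) (hmem x' hx')).trans_lt
      ((hk_diam y).trans_le (min_le_right _ _))
    simpa using (hh_symm hxx').le
  · refine (ContinuousMap.dist_lt_iff hδ).mpr fun x => ?_
    have := hk_dist (k.symm (h x))
    rw [k.apply_symm_apply, dist_comm] at this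
    exact this.trans_le (min_le_left _ _)

theorem BingShrinkable.dense_uniformlyFibred [CompactSpace X] {f : C(X, Y)}
    (hf : BingShrinkable f) {c : ℝ} (hc : 0 < c) :
    Dense ((↑) ⁻¹' {g : C(X, Y) | UniformlyFibred c g} : Set (closure (homeomorphOrbit f))) := by
  refine Subtype.dense_iff.mpr fun g hg => Metric.mem_closure_iff.mpr fun r hr => ?_
  obtain ⟨_, ⟨h, rfl⟩, hgh⟩ := Metric.mem_closure_iff.mp hg (r / 2) (half_pos hr)
  obtain ⟨h', hh'c, hh'd⟩ := hf.exists_uniformlyFibred_comp h hc (half_pos hr)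
  let g' : C(X, Y) := f.comp (h' : C(X, X))
  refine ⟨g', ⟨⟨g', subset_closure ⟨h', rfl⟩⟩, hh'c, rfl⟩, ?_⟩
  calc dist g g' ≤ dist g (f.comp (h : C(X, X))) + dist g' (f.comp (h : C(X, X))) :=
        dist_triangle_right _ _ _
    _ < r / 2 + r / 2 := add_lt_add hgh hh'd
    _ = r := add_halves r

theorem BingShrinkable.exists_injective_mem_closure_homeomorphOrbit [CompactSpace X]
    [CompactSpace Y] {f : C(X, Y)} (hf : BingShrinkable f) {ε : ℝ} (hε : 0 < ε) :
    ∃ g ∈ closure (homeomorphOrbit f), Injective g ∧ dist g f < ε := by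
  have : CompleteSpace (closure (homeomorphOrbit f)) := isClosed_closure.completeSpace_coe
  have hdense : Dense (⋂ n : ℕ, ((↑) ⁻¹' {g : C(X, Y) | UniformlyFibred (1 / (n + 1)) g} :
      Set (closure (homeomorphOrbit f)))) :=
    dense_iInter_of_isOpen
      (fun n => (isOpen_setOf_uniformlyFibred _).preimage continuous_subtype_val)
      (fun n => hf.dense_uniformlyFibred (by positivity))
  obtain ⟨⟨g, hg⟩, hgf, hgV⟩ :=
    Metric.dense_iff.mp hdense ⟨f, subset_closure ⟨Homeomorph.refl X, rfl⟩⟩ ε hε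
  exact ⟨g, hg, injective_of_forall_uniformlyFibred (mem_iInter.mp hgV), hgf⟩

theorem BingShrinkable.approximableByHomeomorphisms [CompactSpace X] [CompactSpace Y]
    {f : X → Y} (hf : Continuous f) (hsurj : Surjective f) (hshr : BingShrinkable f) :
    ApproximableByHomeomorphisms f := by
  intro ε hε
  obtain ⟨g, hg, hinj, hgf⟩ :=
    BingShrinkable.exists_injective_mem_closure_homeomorphOrbit (f := ⟨f, hf⟩) hshr hε
  have hsurj' : Surjective g := ContinuousMap.surjective_of_mem_closure
    (by rintro _ ⟨h, rfl⟩; exact hsurj.comp h.surjective) hg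
  let e : X ≃ Y := Equiv.ofBijective g ⟨hinj, hsurj'⟩
  refine ⟨(show Continuous e from g.continuous).homeoOfEquivCompactToT2, fun x => ?_⟩
  exact (ContinuousMap.dist_apply_le_dist x).trans_lt (by rwa [dist_comm])

theorem bing_shrinking_criterion_general {X Y : Type} [MetricSpace X] [MetricSpace Y]
    [CompactSpace X] [CompactSpace Y]
    (f : X → Y) (hf : Continuous f) (hsurj : Function.Surjective f) :
    ApproximableByHomeomorphisms f ↔
      ∀ ε > (0 : ℝ), ∃ h : X ≃ₜ X,
        (∀ x : X, dist (f (h x)) (f x) < ε) ∧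
        (∀ y : Y, Metric.diam (h '' (f ⁻¹' {y})) < ε) :=
  ⟨ApproximableByHomeomorphisms.bingShrinkable,
    BingShrinkable.approximableByHomeomorphisms hf hsurj⟩

/-- **Bing Shrinking Criterion.** Let `X` and `Y` be nonempty compact metric spaces and
`f : X → Y` a continuous surjection. Then `f` is approximable by homeomorphisms if and only
if for every `ε > 0` there is a homeomorphism `h : X ≃ₜ X` such that
(1) `dist (f (h x)) (f x) < ε` for all `x ∈ X`, and
(2) `diam (h '' (f ⁻¹' {y})) < ε` for all `y ∈ Y`. -/
theorem bing_shrinking_criterion {X Y : Type} [MetricSpace X] [MetricSpace Y]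
    [CompactSpace X] [CompactSpace Y] [Nonempty X] [Nonempty Y]
    (f : X → Y) (hf : Continuous f) (hsurj : Function.Surjective f) :
    ApproximableByHomeomorphisms f ↔
      ∀ ε > (0 : ℝ), ∃ h : X ≃ₜ X,
        (∀ x : X, dist (f (h x)) (f x) < ε) ∧
        (∀ y : Y, Metric.diam (h '' (f ⁻¹' {y})) < ε) :=
  bing_shrinking_criterion_general f hf hsurj
end

section
/- For every n ≥ 1 and every homeomorphism φ of the unit sphere S^{n-1} onto itself, the adjunction space obtained by gluing two copies of the closed unit ball D^n along their boundary spheres via φ (i.e., the quotient of the disjoint union D^n ⊔ D^n identifying x in the boundary of the first copy with φ(x) in the boundary of the second) is homeomorphic to the n-sphere S^n. -/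
/-- The relation on `Dⁿ ⊔ Dⁿ` generating the gluing of two closed unit balls along their
boundary spheres via a homeomorphism `φ` of the sphere: a boundary point `x` of the first
copy is identified with `φ x` in the boundary of the second copy. -/
def glueRel (n : ℕ)
    (φ : Metric.sphere (0 : EuclideanSpace ℝ (Fin n)) 1 ≃ₜ
      Metric.sphere (0 : EuclideanSpace ℝ (Fin n)) 1) :
    (Metric.closedBall (0 : EuclideanSpace ℝ (Fin n)) 1 ⊕
      Metric.closedBall (0 : EuclideanSpace ℝ (Fin n)) 1) →
    (Metric.closedBall (0 : EuclideanSpace ℝ (Fin n)) 1 ⊕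
      Metric.closedBall (0 : EuclideanSpace ℝ (Fin n)) 1) → Prop :=
  fun a b => ∃ x : Metric.sphere (0 : EuclideanSpace ℝ (Fin n)) 1,
    a = Sum.inl ⟨x.1, Metric.sphere_subset_closedBall x.2⟩ ∧
    b = Sum.inr ⟨(φ x : Metric.sphere (0 : EuclideanSpace ℝ (Fin n)) 1).1,
      Metric.sphere_subset_closedBall (φ x).2⟩

/-!
Send the first ball onto the lower hemisphere of the unit sphere of `ℝⁿ × ℝ` by
`x ↦ (x, -√(1 - ‖x‖²))`, and the second onto the upper hemisphere by
`y ↦ (ψ y, √(1 - ‖y‖²))`, where `ψ : y ↦ ‖y‖ • φ⁻¹(y / ‖y‖)` is the cone extension of `φ⁻¹`.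
Two points have the same image exactly when they are identified by the gluing, so the induced
map from the compact glued space to the Hausdorff sphere is a continuous bijection, hence a
homeomorphism.
-/

open Metric Function

noncomputable section

section RadialExtension

variable {E : Type*} [NormedAddCommGroup E] [NormedSpace ℝ E]

-- `(homeomorphUnitSphereProd E ⟨x, hx⟩).1` is `‖x‖⁻¹ • x`.
open Classical in
def radialExtension (ψ : sphere (0 : E) 1 → sphere (0 : E) 1) (x : E) : E :=
  if hx : x = 0 then 0 else ‖x‖ • (ψ (homeomorphUnitSphereProd E ⟨x, hx⟩).1 : E)

variable {ψ : sphere (0 : E) 1 → sphere (0 : E) 1}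

@[simp]
theorem radialExtension_zero : radialExtension ψ 0 = 0 := by
  simp [radialExtension]

theorem radialExtension_smul (u : sphere (0 : E) 1) {r : ℝ} (hr : 0 < r) :
    radialExtension ψ (r • (u : E)) = r • (ψ u : E) := by
  have hu : ‖(u : E)‖ = 1 := mem_sphere_zero_iff_norm.mp u.2
  have hru : r • (u : E) ≠ 0 := smul_ne_zero hr.ne' (ne_of_mem_sphere u.2 one_ne_zero)
  have hunit : (homeomorphUnitSphereProd E ⟨r • (u : E), hru⟩).1 = u := by
    ext1
    simp [norm_smul, hu, abs_of_pos hr, smul_smul, hr.ne']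
  simp [radialExtension, hru, hunit, norm_smul, hu, abs_of_pos hr]

theorem exists_eq_norm_smul_of_ne_zero {x : E} (hx : x ≠ 0) :
    ∃ u : sphere (0 : E) 1, x = ‖x‖ • (u : E) :=
  ⟨(homeomorphUnitSphereProd E ⟨x, hx⟩).1, by simp [smul_smul, norm_ne_zero_iff.mpr hx]⟩

theorem radialExtension_coe_sphere (u : sphere (0 : E) 1) :
    radialExtension ψ u = ψ u := by
  simpa using radialExtension_smul (ψ := ψ) u one_pos

@[simp]
theorem norm_radialExtension (x : E) : ‖radialExtension ψ x‖ = ‖x‖ := by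
  by_cases hx : x = 0
  · simp [hx]
  · simp [radialExtension, hx, norm_smul, norm_eq_of_mem_sphere]

theorem radialExtension_radialExtension (ψ' : sphere (0 : E) 1 → sphere (0 : E) 1) (x : E) :
    radialExtension ψ' (radialExtension ψ x) = radialExtension (ψ' ∘ ψ) x := by
  by_cases hx : x = 0
  · simp [hx]
  obtain ⟨u, hxu⟩ := exists_eq_norm_smul_of_ne_zero hx
  have hpos : 0 < ‖x‖ := norm_pos_iff.mpr hx
  rw [hxu, radialExtension_smul u hpos, radialExtension_smul _ hpos, radialExtension_smul u hpos]
  rfl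

theorem radialExtension_id (x : E) : radialExtension id x = x := by
  by_cases hx : x = 0
  · simp [hx]
  obtain ⟨u, hxu⟩ := exists_eq_norm_smul_of_ne_zero hx
  rw [hxu, radialExtension_smul u (norm_pos_iff.mpr hx)]
  rfl

theorem Function.LeftInverse.radialExtension {ψ' : sphere (0 : E) 1 → sphere (0 : E) 1}
    (h : LeftInverse ψ' ψ) : LeftInverse (radialExtension ψ') (radialExtension ψ) := fun x => by
  rw [radialExtension_radialExtension, h.comp_eq_id, radialExtension_id]

theorem continuous_radialExtension (hψ : Continuous ψ) : Continuous (radialExtension ψ) := by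
  refine continuous_iff_continuousAt.mpr fun x => ?_
  by_cases hx : x = 0
  · subst hx
    rw [ContinuousAt, radialExtension_zero]
    exact squeeze_zero_norm (fun y => (norm_radialExtension y).le)
      (continuous_norm.tendsto' 0 0 norm_zero)
  · have hcont : ContinuousOn (radialExtension ψ) {0}ᶜ := by
      rw [continuousOn_iff_continuous_domRestrict]
      have : ({0}ᶜ : Set E).domRestrict (radialExtension ψ) = fun y : ({0}ᶜ : Set E) =>
          ‖(y : E)‖ • (ψ (homeomorphUnitSphereProd E y).1 : E) :=
        funext fun y => dif_neg y.2
      rw [this]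
      fun_prop
    exact hcont.continuousAt (isOpen_compl_singleton.mem_nhds hx)

@[simps]
def Homeomorph.radialExtension (φ : sphere (0 : E) 1 ≃ₜ sphere (0 : E) 1) : E ≃ₜ E where
  toFun := _root_.radialExtension φ
  invFun := _root_.radialExtension φ.symm
  left_inv := LeftInverse.radialExtension φ.symm_apply_apply
  right_inv := LeftInverse.radialExtension φ.apply_symm_apply
  continuous_toFun := continuous_radialExtension φ.continuous
  continuous_invFun := continuous_radialExtension φ.symm.continuous

end RadialExtension

section Hemisphere

variable {E : Type*} [SeminormedAddCommGroup E]

def toHemisphere (ε : ℝ) (x : E) : WithLp 2 (E × ℝ) :=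
  WithLp.toLp 2 (x, ε * √(1 - ‖x‖ ^ 2))

theorem continuous_toHemisphere (ε : ℝ) : Continuous (toHemisphere (E := E) ε) := by
  unfold toHemisphere
  fun_prop

theorem toHemisphere_injective (ε : ℝ) : Injective (toHemisphere (E := E) ε) :=
  fun _ _ h => congrArg WithLp.fst h

theorem norm_toHemisphere {ε : ℝ} (hε : |ε| = 1) {x : E} (hx : ‖x‖ ≤ 1) :
    ‖toHemisphere ε x‖ = 1 := by
  have hsq : ‖toHemisphere ε x‖ ^ 2 = 1 := by
    rw [WithLp.prod_norm_sq_eq_of_L2]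
    simp only [toHemisphere, WithLp.fst, WithLp.snd, Real.norm_eq_abs, abs_mul, hε, one_mul,
      sq_abs, Real.sq_sqrt (by nlinarith [norm_nonneg x] : (0 : ℝ) ≤ 1 - ‖x‖ ^ 2)]
    ring
  nlinarith [norm_nonneg (toHemisphere ε x)]

theorem toHemisphere_of_norm_eq_one (ε : ℝ) {x : E} (hx : ‖x‖ = 1) :
    toHemisphere ε x = WithLp.toLp 2 (x, 0) := by
  simp [toHemisphere, hx]

theorem eq_and_norm_eq_one_of_toHemisphere_eq {ε ε' : ℝ} (hεε' : ε ≠ ε') {x y : E}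
    (hx : ‖x‖ ≤ 1) (h : toHemisphere ε x = toHemisphere ε' y) : x = y ∧ ‖x‖ = 1 := by
  have hxy : x = y := congrArg WithLp.fst h
  subst hxy
  have hsqrt : √(1 - ‖x‖ ^ 2) = 0 := by
    have := congrArg WithLp.snd h
    simp only [toHemisphere, WithLp.snd] at this
    have hprod : (ε - ε') * √(1 - ‖x‖ ^ 2) = 0 := by rw [sub_mul, this, sub_self]
    exact (mul_eq_zero.mp hprod).resolve_left (sub_ne_zero.mpr hεε')
  refine ⟨rfl, le_antisymm hx ?_⟩
  nlinarith [Real.sqrt_eq_zero'.mp hsqrt, norm_nonneg x]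

theorem toHemisphere_fst {ε : ℝ} {z : WithLp 2 (E × ℝ)} (hz : ‖z‖ = 1)
    (hε : ε * |z.snd| = z.snd) : toHemisphere ε z.fst = z := by
  have hsqrt : √(1 - ‖z.fst‖ ^ 2) = |z.snd| := by
    rw [← Real.sqrt_sq_eq_abs]
    congr 1
    have := WithLp.prod_norm_sq_eq_of_L2 z
    rw [hz, Real.norm_eq_abs, sq_abs] at this
    linarith
  simp only [toHemisphere, hsqrt, hε]
  exact WithLp.toLp_ofLp 2 z

end Hemisphere

section DoubleToSphere

variable {E : Type*} [NormedAddCommGroup E] [NormedSpace ℝ E]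
  (φ : sphere (0 : E) 1 ≃ₜ sphere (0 : E) 1)

def doubleToSphere :
    closedBall (0 : E) 1 ⊕ closedBall (0 : E) 1 → sphere (0 : WithLp 2 (E × ℝ)) 1 :=
  Sum.elim
    (fun x => ⟨toHemisphere (-1) x, mem_sphere_zero_iff_norm.mpr <|
      norm_toHemisphere (by norm_num) (mem_closedBall_zero_iff.mp x.2)⟩)
    (fun y => ⟨toHemisphere 1 ((Homeomorph.radialExtension φ).symm y),
      mem_sphere_zero_iff_norm.mpr <| norm_toHemisphere (by norm_num) <|
        (norm_radialExtension _).trans_le (mem_closedBall_zero_iff.mp y.2)⟩)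

theorem continuous_doubleToSphere : Continuous (doubleToSphere φ) := by
  refine Continuous.sumElim ?_ ?_
  · exact ((continuous_toHemisphere _).comp continuous_subtype_val).subtype_mk _
  · exact ((continuous_toHemisphere _).comp
      ((Homeomorph.radialExtension φ).symm.continuous.comp continuous_subtype_val)).subtype_mk _

theorem surjective_doubleToSphere : Surjective (doubleToSphere φ) := by
  rintro ⟨z, hz⟩
  rw [mem_sphere_zero_iff_norm] at hz
  have hfst : ‖z.fst‖ ≤ 1 := by
    have := WithLp.prod_norm_sq_eq_of_L2 z
    nlinarith [norm_nonneg z.fst, norm_nonneg z.snd]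
  rcases le_or_gt z.snd 0 with hneg | hpos
  · refine ⟨.inl ⟨z.fst, mem_closedBall_zero_iff.mpr hfst⟩, Subtype.ext ?_⟩
    exact toHemisphere_fst hz (by rw [abs_of_nonpos hneg]; ring)
  · refine ⟨.inr ⟨radialExtension φ z.fst, by simpa using hfst⟩, Subtype.ext ?_⟩
    change toHemisphere 1 ((Homeomorph.radialExtension φ).symm (radialExtension φ z.fst)) = z
    rw [← Homeomorph.radialExtension_apply, Homeomorph.symm_apply_apply]
    exact toHemisphere_fst hz (by rw [abs_of_pos hpos, one_mul])

theorem doubleToSphere_inl_injective : Injective (doubleToSphere φ ∘ Sum.inl) :=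
  fun _ _ h => Subtype.ext (toHemisphere_injective _ (congrArg Subtype.val h))

theorem doubleToSphere_inr_injective : Injective (doubleToSphere φ ∘ Sum.inr) :=
  fun _ _ h => Subtype.ext <| (Homeomorph.radialExtension φ).symm.injective <|
    toHemisphere_injective _ (congrArg Subtype.val h)

theorem doubleToSphere_inl_eq_inr_iff {x y : closedBall (0 : E) 1} :
    doubleToSphere φ (.inl x) = doubleToSphere φ (.inr y) ↔
      ∃ u : sphere (0 : E) 1, x = ⟨u, sphere_subset_closedBall u.2⟩ ∧
        y = ⟨φ u, sphere_subset_closedBall (φ u).2⟩ := by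
  constructor
  · intro h
    obtain ⟨hxy, hx⟩ := eq_and_norm_eq_one_of_toHemisphere_eq (by norm_num)
      (mem_closedBall_zero_iff.mp x.2) (congrArg Subtype.val h)
    refine ⟨⟨x, mem_sphere_zero_iff_norm.mpr hx⟩, rfl, Subtype.ext ?_⟩
    rw [(Homeomorph.radialExtension φ).symm_apply_eq.mp hxy.symm,
      Homeomorph.radialExtension_apply]
    exact radialExtension_coe_sphere (⟨x, mem_sphere_zero_iff_norm.mpr hx⟩ : sphere (0 : E) 1)
  · rintro ⟨u, rfl, rfl⟩
    apply Subtype.ext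
    change toHemisphere (-1) (u : E) = toHemisphere 1 (radialExtension φ.symm (φ u))
    rw [radialExtension_coe_sphere, φ.symm_apply_apply,
      toHemisphere_of_norm_eq_one _ (norm_eq_of_mem_sphere u),
      toHemisphere_of_norm_eq_one _ (norm_eq_of_mem_sphere u)]

end DoubleToSphere

def Continuous.quotHomeoOfCompactToT2 {X Y : Type*} [TopologicalSpace X] [CompactSpace X]
    [TopologicalSpace Y] [T2Space Y] {r : X → X → Prop} {f : X → Y} (hf : Continuous f)
    (hsurj : Surjective f) (hr : ∀ a b, r a b → f a = f b)
    (hfib : ∀ a b, f a = f b → Quot.mk r a = Quot.mk r b) : Quot r ≃ₜ Y :=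
  have hinj : Injective (Quot.lift f hr) := by
    rintro ⟨a⟩ ⟨b⟩ h
    exact hfib a b h
  (continuous_quot_lift hr hf).homeoOfEquivCompactToT2
    (f := Equiv.ofBijective _ ⟨hinj, Surjective.of_comp (g := Quot.mk r) hsurj⟩)

section GluedBalls

variable {n : ℕ}
  (φ : sphere (0 : EuclideanSpace ℝ (Fin n)) 1 ≃ₜ sphere (0 : EuclideanSpace ℝ (Fin n)) 1)

theorem doubleToSphere_eq_of_glueRel {a b} (h : glueRel n φ a b) :
    doubleToSphere φ a = doubleToSphere φ b := by
  obtain ⟨u, rfl, rfl⟩ := h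
  exact (doubleToSphere_inl_eq_inr_iff φ).mpr ⟨u, rfl, rfl⟩

theorem quot_mk_glueRel_eq_of_doubleToSphere_eq {a b}
    (h : doubleToSphere φ a = doubleToSphere φ b) :
    Quot.mk (glueRel n φ) a = Quot.mk (glueRel n φ) b := by
  rcases a with x | y <;> rcases b with x' | y'
  · rw [doubleToSphere_inl_injective φ h]
  · obtain ⟨u, rfl, rfl⟩ := (doubleToSphere_inl_eq_inr_iff φ).mp h
    exact Quot.sound ⟨u, rfl, rfl⟩
  · obtain ⟨u, rfl, rfl⟩ := (doubleToSphere_inl_eq_inr_iff φ).mp h.symm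
    exact (Quot.sound ⟨u, rfl, rfl⟩).symm
  · rw [doubleToSphere_inr_injective φ h]

def gluedBallsHomeomorph :
    Quot (glueRel n φ) ≃ₜ sphere (0 : WithLp 2 (EuclideanSpace ℝ (Fin n) × ℝ)) 1 :=
  (continuous_doubleToSphere φ).quotHomeoOfCompactToT2 (surjective_doubleToSphere φ)
    (fun _ _ => doubleToSphere_eq_of_glueRel φ)
    (fun _ _ => quot_mk_glueRel_eq_of_doubleToSphere_eq φ)

end GluedBalls

def sphereHomeomorphOfFinrankEq {F : Type*} [NormedAddCommGroup F] [InnerProductSpace ℝ F]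
    [FiniteDimensional ℝ F] {m : ℕ} (h : Module.finrank ℝ F = m) (r : ℝ) :
    sphere (0 : F) r ≃ₜ sphere (0 : EuclideanSpace ℝ (Fin m)) r :=
  ((stdOrthonormalBasis ℝ F).reindex (finCongr h)).repr.toHomeomorph.subtype fun x => by simp

theorem glue_two_balls_homeomorphic_sphere_general (n : ℕ)
    (φ : Metric.sphere (0 : EuclideanSpace ℝ (Fin n)) 1 ≃ₜ
      Metric.sphere (0 : EuclideanSpace ℝ (Fin n)) 1) :
    Nonempty (Quot (glueRel n φ) ≃ₜ
      Metric.sphere (0 : EuclideanSpace ℝ (Fin (n + 1))) 1) := by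
  have hrank : Module.finrank ℝ (WithLp 2 (EuclideanSpace ℝ (Fin n) × ℝ)) = n + 1 := by
    rw [(WithLp.linearEquiv 2 ℝ _).finrank_eq, Module.finrank_prod, finrank_euclideanSpace_fin,
      Module.finrank_self]
  exact ⟨(gluedBallsHomeomorph φ).trans (sphereHomeomorphOfFinrankEq hrank 1)⟩

/-- For every `n ≥ 1` and every homeomorphism `φ` of the unit sphere `S^{n-1}` onto itself,
the adjunction space obtained by gluing two copies of the closed unit ball `Dⁿ` along their
boundary spheres via `φ` (with the quotient topology on the disjoint union) is homeomorphic
to the `n`-sphere `Sⁿ ⊆ ℝ^{n+1}`. -/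
theorem glue_two_balls_homeomorphic_sphere (n : ℕ) (hn : 1 ≤ n)
    (φ : Metric.sphere (0 : EuclideanSpace ℝ (Fin n)) 1 ≃ₜ
      Metric.sphere (0 : EuclideanSpace ℝ (Fin n)) 1) :
    Nonempty (Quot (glueRel n φ) ≃ₜ
      Metric.sphere (0 : EuclideanSpace ℝ (Fin (n + 1))) 1) :=
  glue_two_balls_homeomorphic_sphere_general n φ
end
end
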